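/- Consider the Frank-Wolfe algorithm with exact line-search γ_t ∈ argmin_{γ∈[0,1]} f(x_t + γ(s_t − x_t)) on a continuously differentiable (possibly non-convex) f with curvature constant C_f over a compact convex M. Then min_{0≤k≤t} g_k ≤ max{2h_0, C_f}/√(t+1) for all t ≥ 0, where h_0 := f(x_0) − min_{x∈M} f(x). -/

import Mathlib

/-!
Any step size `γ' ∈ (0, 1]` is a competitor of the line search, so the curvature constant gives
`f(x_{k+1}) ≤ f(x_k) - γ' g_k + γ'² C_f / 2` at every step. Bounding every `g_k` below by
`G = min_{k ≤ t} g_k` and telescoping over `t + 1` steps yields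
`(t + 1)(γ' G - γ'² C_f / 2) ≤ h_0`. The choice `γ' = min(1, G / C_f)` turns this into
`G² (t + 1) ≤ max(2 h_0, C_f)²`.
-/

open RealInnerProductSpace Set

theorem sq_mul_le_max_sq_of_forall_stepSize {G C h n : ℝ} (hG : 0 < G) (hn : 1 ≤ n)
    (hstep : ∀ γ ∈ Ioc (0 : ℝ) 1, n * (γ * G - γ ^ 2 / 2 * C) ≤ h) :
    G ^ 2 * n ≤ max (2 * h) C ^ 2 := by
  rcases lt_or_ge C G with hCG | hGC
  · have h₁ := hstep 1 ⟨one_pos, le_rfl⟩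
    have hGn : G * n ≤ 2 * h := by nlinarith
    have hGn₀ : 0 ≤ G * n := by positivity [hG.le, zero_le_one.trans hn]
    calc G ^ 2 * n ≤ (G * n) ^ 2 := by nlinarith
      _ ≤ (2 * h) ^ 2 := pow_le_pow_left₀ hGn₀ hGn 2
      _ ≤ max (2 * h) C ^ 2 := pow_le_pow_left₀ (hGn₀.trans hGn) (le_max_left _ _) 2
  · have hC : 0 < C := hG.trans_le hGC
    have h₁ := hstep (G / C) ⟨div_pos hG hC, (div_le_one hC).2 hGC⟩
    have hval : n * (G / C * G - (G / C) ^ 2 / 2 * C) = G ^ 2 * n / (2 * C) := by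
      field_simp
      ring
    rw [hval, div_le_iff₀ (by positivity)] at h₁
    have h2h : 2 * h ≤ max (2 * h) C := le_max_left _ _
    have hCm : C ≤ max (2 * h) C := le_max_right _ _
    nlinarith

theorem le_max_div_sqrt_of_forall_stepSize {G C h n : ℝ} (hh : 0 ≤ h) (hn : 1 ≤ n)
    (hstep : ∀ γ ∈ Ioc (0 : ℝ) 1, n * (γ * G - γ ^ 2 / 2 * C) ≤ h) :
    G ≤ max (2 * h) C / √n := by
  have hm : 0 ≤ max (2 * h) C := (by positivity : 0 ≤ 2 * h).trans (le_max_left _ _)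
  have hsqrt : 0 < √n := Real.sqrt_pos.2 (by linarith)
  rcases le_or_gt G 0 with hG | hG
  · exact hG.trans (by positivity)
  rw [le_div_iff₀ hsqrt]
  refine (abs_le_of_sq_le_sq' ?_ hm).2
  rw [mul_pow, Real.sq_sqrt (by linarith)]
  exact sq_mul_le_max_sq_of_forall_stepSize hG hn hstep

theorem le_sub_mul_of_forall_succ_le_sub {a : ℕ → ℝ} {δ : ℝ} {n : ℕ}
    (h : ∀ k < n, a (k + 1) ≤ a k - δ) : a n ≤ a 0 - n * δ := by
  induction n with
  | zero => simp
  | succ n ih =>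
    have hn := h n n.lt_succ_self
    have ih := ih fun k hk => h k (hk.trans n.lt_succ_self)
    push_cast
    linarith

theorem Convex.mem_of_succ_eq_add_smul_sub {E : Type*} [AddCommGroup E] [Module ℝ E]
    {M : Set E} (hM : Convex ℝ M) {x s : ℕ → E} {γ : ℕ → ℝ}
    (hx0 : x 0 ∈ M) (hsM : ∀ t, s t ∈ M) (hγ : ∀ t, γ t ∈ Icc (0 : ℝ) 1)
    (hxsucc : ∀ t, x (t + 1) = x t + γ t • (s t - x t)) (t : ℕ) : x t ∈ M := by
  induction t with
  | zero => exact hx0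
  | succ t ih => exact hxsucc t ▸ hM.add_smul_sub_mem ih (hsM t) (hγ t)

section FrankWolfe

variable {E : Type*} [NormedAddCommGroup E] [InnerProductSpace ℝ E] [CompleteSpace E]

def curvatureSet (f : E → ℝ) (M : Set E) : Set ℝ :=
  {c : ℝ | ∃ x ∈ M, ∃ s ∈ M, ∃ γ ∈ Ioc (0:ℝ) 1,
    c = 2 / γ ^ 2 * (f (x + γ • (s - x)) - f x - γ * ⟪gradient f x, s - x⟫)}

theorem le_add_of_mem_upperBounds_curvatureSet {f : E → ℝ} {M : Set E} {C : ℝ}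
    (hC : C ∈ upperBounds (curvatureSet f M)) {x s : E} (hx : x ∈ M) (hs : s ∈ M) {γ : ℝ}
    (hγ : γ ∈ Ioc (0 : ℝ) 1) :
    f (x + γ • (s - x)) ≤ f x + γ * ⟪gradient f x, s - x⟫ + γ ^ 2 / 2 * C := by
  have h := hC ⟨x, hx, s, hs, γ, hγ, rfl⟩
  rw [div_mul_eq_mul_div, div_le_iff₀ (by positivity [hγ.1])] at h
  linarith

theorem lineSearch_le_of_mem_upperBounds_curvatureSet {f : E → ℝ} {M : Set E} {C : ℝ}
    (hC : C ∈ upperBounds (curvatureSet f M)) {x s : E} (hx : x ∈ M) (hs : s ∈ M) {γ : ℝ}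
    (hls : ∀ γ' ∈ Icc (0 : ℝ) 1, f (x + γ • (s - x)) ≤ f (x + γ' • (s - x)))
    {γ' : ℝ} (hγ' : γ' ∈ Ioc (0 : ℝ) 1) :
    f (x + γ • (s - x)) ≤ f x + γ' * ⟪gradient f x, s - x⟫ + γ' ^ 2 / 2 * C :=
  (hls γ' (Ioc_subset_Icc_self hγ')).trans
    (le_add_of_mem_upperBounds_curvatureSet hC hx hs hγ')

end FrankWolfe

theorem frankWolfe_nonconvex_convergence_lineSearch_general {d : ℕ}
    (f : EuclideanSpace ℝ (Fin d) → ℝ) (M : Set (EuclideanSpace ℝ (Fin d)))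
    (hMcp : IsCompact M) (hMcv : Convex ℝ M) (hf : ContDiff ℝ 1 f)
    (Cf : ℝ)
    (hCf : Cf = sSup {c : ℝ | ∃ x ∈ M, ∃ s ∈ M, ∃ γ ∈ Set.Ioc (0:ℝ) 1,
      c = 2 / γ ^ 2 * (f (x + γ • (s - x)) - f x - γ * ⟪gradient f x, s - x⟫)})
    (hbdd : BddAbove {c : ℝ | ∃ x ∈ M, ∃ s ∈ M, ∃ γ ∈ Set.Ioc (0:ℝ) 1,
      c = 2 / γ ^ 2 * (f (x + γ • (s - x)) - f x - γ * ⟪gradient f x, s - x⟫)})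
    (x s : ℕ → EuclideanSpace ℝ (Fin d)) (g γ : ℕ → ℝ)
    (hx0 : x 0 ∈ M)
    (hsM : ∀ t, s t ∈ M)
    (hg : ∀ t, g t = ⟪s t - x t, -gradient f (x t)⟫)
    (hγmem : ∀ t, γ t ∈ Set.Icc (0:ℝ) 1)
    (hls : ∀ t, ∀ γ' ∈ Set.Icc (0:ℝ) 1,
      f (x t + γ t • (s t - x t)) ≤ f (x t + γ' • (s t - x t)))
    (hxsucc : ∀ t, x (t + 1) = x t + γ t • (s t - x t)) :
    ∀ t : ℕ,
      (Finset.range (t + 1)).inf' Finset.nonempty_range_add_one g ≤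
        max (2 * (f (x 0) - sInf (f '' M))) Cf / Real.sqrt ((t : ℝ) + 1) := by
  intro t
  set G := (Finset.range (t + 1)).inf' Finset.nonempty_range_add_one g
  have hxM := hMcv.mem_of_succ_eq_add_smul_sub hx0 hsM hγmem hxsucc
  have hCub : Cf ∈ upperBounds (curvatureSet f M) := hCf ▸ fun c hc => le_csSup hbdd hc
  have hbelow : BddBelow (f '' M) := (hMcp.image hf.continuous).bddBelow
  refine le_max_div_sqrt_of_forall_stepSize
    (sub_nonneg.2 (csInf_le hbelow ⟨x 0, hx0, rfl⟩)) (by simp) fun γ' hγ' => ?_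
  have hdescent : ∀ k < t + 1, f (x (k + 1)) ≤ f (x k) - (γ' * G - γ' ^ 2 / 2 * Cf) := by
    intro k hk
    have hstep := lineSearch_le_of_mem_upperBounds_curvatureSet hCub (hxM k) (hsM k)
      (hls k) hγ'
    have hGk : G ≤ g k := Finset.inf'_le g (Finset.mem_range.2 hk)
    rw [hg k, inner_neg_right, real_inner_comm] at hGk
    rw [hxsucc k]
    nlinarith [hγ'.1]
  have htele := le_sub_mul_of_forall_succ_le_sub (a := fun k => f (x k)) hdescent
  have hmin := csInf_le hbelow ⟨x (t + 1), hxM (t + 1), rfl⟩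
  push_cast at htele
  linarith

/-- convergence of Frank-Wolfe with exact line-search on a possibly
non-convex `f` with finite curvature constant `C_f`:
`min_{0≤k≤t} g_k ≤ max{2h_0, C_f}/√(t+1)`, where `h_0 = f(x_0) - min_{x∈M} f(x)`. -/
theorem frankWolfe_nonconvex_convergence_lineSearch {d : ℕ}
    (f : EuclideanSpace ℝ (Fin d) → ℝ) (M : Set (EuclideanSpace ℝ (Fin d)))
    (hMne : M.Nonempty) (hMcp : IsCompact M) (hMcv : Convex ℝ M) (hf : ContDiff ℝ 1 f)
    (Cf : ℝ)
    (hCf : Cf = sSup {c : ℝ | ∃ x ∈ M, ∃ s ∈ M, ∃ γ ∈ Set.Ioc (0:ℝ) 1,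
      c = 2 / γ ^ 2 * (f (x + γ • (s - x)) - f x - γ * ⟪gradient f x, s - x⟫)})
    (hbdd : BddAbove {c : ℝ | ∃ x ∈ M, ∃ s ∈ M, ∃ γ ∈ Set.Ioc (0:ℝ) 1,
      c = 2 / γ ^ 2 * (f (x + γ • (s - x)) - f x - γ * ⟪gradient f x, s - x⟫)})
    (x s : ℕ → EuclideanSpace ℝ (Fin d)) (g γ : ℕ → ℝ)
    (hx0 : x 0 ∈ M)
    (hsM : ∀ t, s t ∈ M)
    (hsmin : ∀ t, ∀ s' ∈ M, ⟪s t, gradient f (x t)⟫ ≤ ⟪s', gradient f (x t)⟫)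
    (hg : ∀ t, g t = ⟪s t - x t, -gradient f (x t)⟫)
    (hγmem : ∀ t, γ t ∈ Set.Icc (0:ℝ) 1)
    (hls : ∀ t, ∀ γ' ∈ Set.Icc (0:ℝ) 1,
      f (x t + γ t • (s t - x t)) ≤ f (x t + γ' • (s t - x t)))
    (hxsucc : ∀ t, x (t + 1) = x t + γ t • (s t - x t)) :
    ∀ t : ℕ,
      (Finset.range (t + 1)).inf' Finset.nonempty_range_add_one g ≤
        max (2 * (f (x 0) - sInf (f '' M))) Cf / Real.sqrt ((t : ℝ) + 1) :=
  frankWolfe_nonconvex_convergence_lineSearch_general f M hMcp hMcv hf Cf hCf hbdd x s g γ hx0 hsM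
    hg hγmem hls hxsucc
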